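/- Let (H, α, σ) be a unicellular map with face γ = ασ and root r. For a half-edge i, set j = σ^{-1}ασ(i). If i is an up-step (i <_m σ(i)), then j is a down-step (σ(j) ≤_m j). -/

import Mathlib

open Equiv

/-!
With `γ = α * σ`, let `a` and `b` be the positions of `i` and `σ i`. Then `σ j = γ i` sits at
position `a + 1`, and `γ j = σ i` forces `j` to sit at position `b - 1`. As `α` has no fixed
points, `σ i ≠ γ i`, i.e. `b ≠ a + 1`; together with `a < b` this leaves room for
`a + 1 ≤ b - 1` without wrapping around modulo `2n`.
-/

theorem Fin.add_one_le_sub_one_of_lt {m : ℕ} [NeZero m] {a b : Fin m} (hab : a < b)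
    (hne : b ≠ a + 1) : a + 1 ≤ b - 1 := by
  have hlt : (a : ℕ) < b := hab
  have ha1 : ((a + 1 : Fin m) : ℕ) = a + 1 := Fin.val_add_one_of_lt' (by omega)
  have hne' : (b : ℕ) ≠ a + 1 := fun h => hne (Fin.ext (h.trans ha1.symm))
  have hm : 1 % m = 1 := Nat.one_mod_eq_one.2 (by omega)
  have h1b : (1 : Fin m) ≤ b := by rw [Fin.le_def, Fin.val_one', hm]; omega
  rw [Fin.le_def, ha1, Fin.sub_val_of_le h1b, Fin.val_one', hm]
  omega

theorem Equiv.symm_perm_apply_eq_add_one {H : Type*} {m : ℕ} [NeZero m] {γ : Perm H}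
    (e : Fin m ≃ H) (he : ∀ k, γ (e k) = e (k + 1)) (x : H) : e.symm (γ x) = e.symm x + 1 :=
  e.symm_apply_eq.2 (by rw [← he, e.apply_symm_apply])

namespace Equiv.Perm

theorem apply_inv_apply_apply {H : Type*} (α σ : Perm H) (i : H) :
    σ (σ⁻¹ (α (σ i))) = (α * σ) i := by
  simp

theorem mul_apply_inv_apply_apply {H : Type*} {α : Perm H} (σ : Perm H) (hα : α * α = 1)
    (i : H) : (α * σ) (σ⁻¹ (α (σ i))) = σ i := by
  rw [mul_apply, ← mul_apply σ, mul_inv_cancel, one_apply, ← mul_apply, hα, one_apply]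

end Equiv.Perm

/-- in a rooted unicellular map `(H, α, σ)` with face
`γ = ασ` and order `<ₘ` encoded by `ord : Fin (2n) ≃ H`, for a half-edge
`i` set `j = σ⁻¹(α(σ(i)))`.  If `i` is an up-step (`i <ₘ σ(i)`) then `j`
is a down-step (`σ(j) ≤ₘ j`). -/
theorem upstep_gives_downstep {H : Type*}
    (n : ℕ) (hn : 1 ≤ n)
    (α σ : Equiv.Perm H)
    (hinv : α * α = 1) (hfp : ∀ h : H, α h ≠ h)
    (ord : Fin (2 * n) ≃ H)
    (hordsucc : ∀ k : Fin (2 * n), (α * σ) (ord k) = ord (k + ⟨1, by omega⟩))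
    (i j : H) (hj : j = σ⁻¹ (α (σ i)))
    (hup : ord.symm i < ord.symm (σ i)) :
    ord.symm (σ j) ≤ ord.symm j := by
  have : NeZero (2 * n) := ⟨by omega⟩
  have hone : (⟨1, by omega⟩ : Fin (2 * n)) = 1 := Fin.ext (Nat.one_mod_eq_one.2 (by omega)).symm
  have hsucc := Equiv.symm_perm_apply_eq_add_one ord (hone ▸ hordsucc)
  have hσj : ord.symm (σ j) = ord.symm i + 1 := by
    rw [hj, Perm.apply_inv_apply_apply, hsucc]
  have hj' : ord.symm j = ord.symm (σ i) - 1 :=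
    eq_sub_of_add_eq (by rw [← hsucc, hj, Perm.mul_apply_inv_apply_apply σ hinv])
  have hne : ord.symm (σ i) ≠ ord.symm i + 1 := by
    rw [← hsucc]
    exact fun h => hfp (σ i) (ord.symm.injective h).symm
  rw [hσj, hj']
  exact Fin.add_one_le_sub_one_of_lt hup hne
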